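/- Let δ, p, q, α be real numbers with 0<δ<1, 2≤p<q and q<α+1, let X>0, Y≥0, A>0, λ>0 and B∈ℝ be reals, and define σ(t)=X·t^{p−1−α}+Y·t^{q−1−α}−A·t^{−α−δ} and φ(t)=(X/p)·t^p+(Y/q)·t^q−(A/(1−δ))·t^{1−δ}−(λB/(α+1))·t^{α+1} for t>0. Then φ′(t)=t^{α}·(σ(t)−λ·B) for every t>0. Moreover, if σ(1)=λ·B and σ′(1)>0, then 1<t_max (where t_max is the unique critical point of σ), σ(t)<λ·B for every t∈(0,1), and consequently φ′(t)<0 for every t∈(0,1), so φ is strictly decreasing on (0,1]. -/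

import Mathlib

/-!
Differentiating term by term, `φ′(t) = t^α (σ(t) − λB)` and
`σ′(t) = t^{−α−δ−1} ((α+δ)A − g(t))` with
`g(t) = (α+1−p) X t^{p−1+δ} + (α+1−q) Y t^{q−1+δ}` strictly increasing on `(0, ∞)`.
Since `g(t_max) = (α+δ)A`, the function `σ` is strictly increasing on `(0, t_max]`, and
`σ′(1) > 0` says `g(1) < g(t_max)`, i.e. `1 < t_max`. Hence `σ < σ(1) = λB` on `(0, 1)`,
so `φ′ < 0` there.
-/

open Set

lemma Real.rpow_mul_rpow_of_add_eq {t a b c : ℝ} (ht : 0 < t) (h : a + b = c) :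
    t ^ a * t ^ b = t ^ c := by
  rw [← Real.rpow_add ht, h]

lemma Real.hasDerivAt_div_mul_rpow {c r t : ℝ} (hr : r ≠ 0) (ht : t ≠ 0) :
    HasDerivAt (fun t : ℝ => c / r * t ^ r) (c * t ^ (r - 1)) t := by
  refine ((Real.hasDerivAt_rpow_const (p := r) (Or.inl ht)).const_mul (c / r)).congr_deriv ?_
  field_simp

lemma strictMonoOn_mul_rpow_add_mul_rpow {a b r s : ℝ} (ha : 0 < a) (hb : 0 ≤ b)
    (hr : 0 < r) (hs : 0 ≤ s) :
    StrictMonoOn (fun t : ℝ => a * t ^ r + b * t ^ s) (Ici 0) := fun _ hx _ _ hxy =>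
  add_lt_add_of_lt_of_le (mul_lt_mul_of_pos_left (Real.rpow_lt_rpow hx hxy hr) ha)
    (mul_le_mul_of_nonneg_left (Real.rpow_le_rpow hx hxy.le hs) hb)

noncomputable section

namespace Fibering

variable (X Y A p q α δ c : ℝ)

def sigma (t : ℝ) : ℝ :=
  X * t ^ (p - 1 - α) + Y * t ^ (q - 1 - α) - A * t ^ (-α - δ)

def fibering (t : ℝ) : ℝ :=
  X / p * t ^ p + Y / q * t ^ q - A / (1 - δ) * t ^ (1 - δ) - c / (α + 1) * t ^ (α + 1)

/-- The function `g` above: `t_max` is the solution of `critLHS t = (α+δ)A`. -/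
def critLHS (t : ℝ) : ℝ :=
  (α + 1 - p) * X * t ^ (p - 1 + δ) + (α + 1 - q) * Y * t ^ (q - 1 + δ)

variable {X Y A p q α δ c}

theorem hasDerivAt_fibering {t : ℝ} (hp : p ≠ 0) (hq : q ≠ 0) (hδ : δ ≠ 1)
    (hα : α + 1 ≠ 0) (ht : 0 < t) :
    HasDerivAt (fibering X Y A p q α δ c) (t ^ α * (sigma X Y A p q α δ t - c)) t := by
  have hδ' : 1 - δ ≠ 0 := sub_ne_zero.2 hδ.symm
  refine ((((Real.hasDerivAt_div_mul_rpow (c := X) hp ht.ne').add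
    (Real.hasDerivAt_div_mul_rpow (c := Y) hq ht.ne')).sub
    (Real.hasDerivAt_div_mul_rpow (c := A) hδ' ht.ne')).sub
    (Real.hasDerivAt_div_mul_rpow (c := c) hα ht.ne')).congr_deriv ?_
  rw [sigma, add_sub_cancel_right]
  linear_combination
    -X * Real.rpow_mul_rpow_of_add_eq ht (show α + (p - 1 - α) = p - 1 by ring)
    - Y * Real.rpow_mul_rpow_of_add_eq ht (show α + (q - 1 - α) = q - 1 by ring)
    + A * Real.rpow_mul_rpow_of_add_eq ht (show α + (-α - δ) = 1 - δ - 1 by ring)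

theorem hasDerivAt_sigma {t : ℝ} (ht : 0 < t) :
    HasDerivAt (sigma X Y A p q α δ)
      (t ^ (-α - δ - 1) * ((α + δ) * A - critLHS X Y p q α δ t)) t := by
  refine ((((Real.hasDerivAt_rpow_const (p := p - 1 - α) (Or.inl ht.ne')).const_mul X).add
    ((Real.hasDerivAt_rpow_const (p := q - 1 - α) (Or.inl ht.ne')).const_mul Y)).sub
    ((Real.hasDerivAt_rpow_const (p := -α - δ) (Or.inl ht.ne')).const_mul A)).congr_deriv ?_
  rw [critLHS]
  linear_combination
    (α + 1 - p) * X *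
      Real.rpow_mul_rpow_of_add_eq ht (show -α - δ - 1 + (p - 1 + δ) = p - 1 - α - 1 by ring)
    + (α + 1 - q) * Y *
      Real.rpow_mul_rpow_of_add_eq ht (show -α - δ - 1 + (q - 1 + δ) = q - 1 - α - 1 by ring)

theorem deriv_sigma_one :
    deriv (sigma X Y A p q α δ) 1 = (α + δ) * A - critLHS X Y p q α δ 1 := by
  rw [(hasDerivAt_sigma one_pos).deriv, Real.one_rpow, one_mul]

section Monotone

variable (hX : 0 < X) (hY : 0 ≤ Y) (hpα : p < α + 1) (hqα : q ≤ α + 1)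
  (hpδ : 0 < p - 1 + δ) (hqδ : 0 ≤ q - 1 + δ)
include hX hY hpα hqα hpδ hqδ

theorem strictMonoOn_critLHS : StrictMonoOn (critLHS X Y p q α δ) (Ici 0) :=
  strictMonoOn_mul_rpow_add_mul_rpow (mul_pos (by linarith) hX) (mul_nonneg (by linarith) hY)
    hpδ hqδ

theorem strictMonoOn_sigma {tmax : ℝ} (htmax : critLHS X Y p q α δ tmax = (α + δ) * A) :
    StrictMonoOn (sigma X Y A p q α δ) (Ioc 0 tmax) := by
  refine strictMonoOn_of_deriv_pos (convex_Ioc 0 tmax)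
    (fun t ht => (hasDerivAt_sigma ht.1).continuousAt.continuousWithinAt) fun t ht => ?_
  rw [interior_Ioc] at ht
  rw [(hasDerivAt_sigma ht.1).deriv, ← htmax]
  have hlt := strictMonoOn_critLHS hX hY hpα hqα hpδ hqδ ht.1.le (ht.1.trans ht.2).le ht.2
  exact mul_pos (Real.rpow_pos_of_pos ht.1 _) (sub_pos.2 hlt)

theorem one_lt_of_deriv_sigma_one_pos {tmax : ℝ} (htmax₀ : 0 < tmax)
    (htmax : critLHS X Y p q α δ tmax = (α + δ) * A)
    (h : 0 < deriv (sigma X Y A p q α δ) 1) : 1 < tmax := by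
  rw [deriv_sigma_one, ← htmax, sub_pos] at h
  exact (strictMonoOn_critLHS hX hY hpα hqα hpδ hqδ).lt_iff_lt (mem_Ici.2 zero_le_one)
    htmax₀.le |>.1 h

end Monotone

end Fibering

end

open Fibering in
theorem statement16_general
    (δ p q α X Y A lam B : ℝ)
    (hδ0 : 0 < δ) (hδ1 : δ < 1)
    (hp : 2 ≤ p) (hpq : p < q) (hq : q < α + 1)
    (hX : 0 < X) (hY : 0 ≤ Y)
    (σ φ : ℝ → ℝ)
    (hσ : ∀ t : ℝ, σ t = X * t ^ (p - 1 - α) + Y * t ^ (q - 1 - α)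
        - A * t ^ (-α - δ))
    (hφ : ∀ t : ℝ, φ t = (X / p) * t ^ p + (Y / q) * t ^ q
        - (A / (1 - δ)) * t ^ (1 - δ)
        - (lam * B / (α + 1)) * t ^ (α + 1)) :
    (∀ t : ℝ, 0 < t → HasDerivAt φ (t ^ α * (σ t - lam * B)) t) ∧
    (σ 1 = lam * B → 0 < deriv σ 1 →
      ∀ tmax : ℝ, 0 < tmax →
        (α + 1 - p) * X * tmax ^ (p - 1 + δ)
          + (α + 1 - q) * Y * tmax ^ (q - 1 + δ) = (α + δ) * A →
        1 < tmax ∧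
        (∀ t : ℝ, 0 < t → t < 1 → σ t < lam * B) ∧
        (∀ t : ℝ, 0 < t → t < 1 → deriv φ t < 0) ∧
        StrictAntiOn φ (Set.Ioc 0 1)) := by
  obtain rfl : σ = sigma X Y A p q α δ := funext hσ
  obtain rfl : φ = fibering X Y A p q α δ (lam * B) := funext hφ
  have hφ' (t : ℝ) (ht : 0 < t) : HasDerivAt (fibering X Y A p q α δ (lam * B))
      (t ^ α * (sigma X Y A p q α δ t - lam * B)) t :=
    hasDerivAt_fibering (by linarith) (by linarith) hδ1.ne (by linarith) ht
  refine ⟨hφ', fun hσ1 hσ'1 tmax htmax₀ htmax => ?_⟩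
  have hpα : p < α + 1 := by linarith
  have hpδ : 0 < p - 1 + δ := by linarith
  have h1 := one_lt_of_deriv_sigma_one_pos hX hY hpα hq.le hpδ (by linarith) htmax₀ htmax hσ'1
  have hσlt (t : ℝ) (ht : 0 < t) (ht1 : t < 1) : sigma X Y A p q α δ t < lam * B :=
    hσ1 ▸ strictMonoOn_sigma hX hY hpα hq.le hpδ (by linarith) htmax ⟨ht, by linarith⟩
      ⟨one_pos, h1.le⟩ ht1
  have hφneg (t : ℝ) (ht : 0 < t) (ht1 : t < 1) :
      deriv (fibering X Y A p q α δ (lam * B)) t < 0 := by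
    rw [(hφ' t ht).deriv]
    exact mul_neg_of_pos_of_neg (Real.rpow_pos_of_pos ht _) (sub_neg.2 (hσlt t ht ht1))
  refine ⟨h1, hσlt, hφneg, strictAntiOn_of_deriv_neg (convex_Ioc 0 1)
    (fun t ht => (hφ' t ht.1).continuousAt.continuousWithinAt) fun t ht => ?_⟩
  rw [interior_Ioc] at ht
  exact hφneg t ht.1 ht.2

/-- the fibering map
`φ(t) = (X/p)·t^p + (Y/q)·t^q − (A/(1−δ))·t^{1−δ} − (λB/(α+1))·t^{α+1}`
satisfies `φ′(t) = t^α·(σ(t) − λB)` for every `t > 0`, where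
`σ(t) = X·t^{p−1−α} + Y·t^{q−1−α} − A·t^{−α−δ}`.  Moreover, if `σ(1) = λB`
and `σ′(1) > 0`, then `1 < t_max` (the unique critical point of `σ`),
`σ(t) < λB` for `t ∈ (0,1)`, hence `φ′(t) < 0` on `(0,1)` and `φ` is
strictly decreasing on `(0,1]`. -/
theorem statement16
    (δ p q α X Y A lam B : ℝ)
    (hδ0 : 0 < δ) (hδ1 : δ < 1)
    (hp : 2 ≤ p) (hpq : p < q) (hq : q < α + 1)
    (hX : 0 < X) (hY : 0 ≤ Y) (hA : 0 < A) (hlam : 0 < lam)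
    (σ φ : ℝ → ℝ)
    (hσ : ∀ t : ℝ, σ t = X * t ^ (p - 1 - α) + Y * t ^ (q - 1 - α)
        - A * t ^ (-α - δ))
    (hφ : ∀ t : ℝ, φ t = (X / p) * t ^ p + (Y / q) * t ^ q
        - (A / (1 - δ)) * t ^ (1 - δ)
        - (lam * B / (α + 1)) * t ^ (α + 1)) :
    (∀ t : ℝ, 0 < t → HasDerivAt φ (t ^ α * (σ t - lam * B)) t) ∧
    (σ 1 = lam * B → 0 < deriv σ 1 →
      ∀ tmax : ℝ, 0 < tmax →
        (α + 1 - p) * X * tmax ^ (p - 1 + δ)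
          + (α + 1 - q) * Y * tmax ^ (q - 1 + δ) = (α + δ) * A →
        1 < tmax ∧
        (∀ t : ℝ, 0 < t → t < 1 → σ t < lam * B) ∧
        (∀ t : ℝ, 0 < t → t < 1 → deriv φ t < 0) ∧
        StrictAntiOn φ (Set.Ioc 0 1)) :=
  statement16_general δ p q α X Y A lam B hδ0 hδ1 hp hpq hq hX hY σ φ hσ hφ
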